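/- arXiv:1705.00837 — 2 statements merged into one kernel-verified Lean document; each statement's English description precedes it below -/
import Mathlib

section
/- Let α be a strongly continuous action of a locally compact group G on a von Neumann algebra M (i.e., s ↦ α_s is a homomorphism into Aut(M) with ‖φ∘α_s − φ‖ → 0 for all normal states φ as s → e). For f ∈ L^1(G) and a norm-bounded sequence (x^ν) in M, the averaged sequence (α_f(x^ν)), where α_f(y) = ∫_G f(s) α_s(y) ds, is (α, ω)-equicontinuous. -/
/-!
Every `⋆`-automorphism `β` of `B(H)` is spatial, `β x = U x U*` for a unitary `U`: if `η` is a
unit vector fixed by the projection `β(|ξ⟩⟨ξ|)`, then `U ζ = β(|ζ⟩⟨ξ|) η`. Hence each `α_t`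
commutes with the weak integral, and left invariance of Haar measure gives
`α_t(α_f y) = α_{f(t⁻¹ ·)}(y)`, so that
`‖(α_t(α_f y) - α_f y) ξ‖ ≤ ‖f(t⁻¹ ·) - f‖₁ ‖y‖ ‖ξ‖`. The same bound holds for the adjoints since
`(α_f y)* = α_{f̄}(y*)`. Continuity of translation in `L¹(G)` makes the right-hand side small
uniformly in `ν`, so one can take `A = ℕ`.
-/

open MeasureTheory Filter Topology

/-- A norm-bounded sequence `(x ν)` in `B(H)` is `(α, ω)`-equicontinuous if for every
σ-strong* neighbourhood of `0` (tested by the seminorms `x ↦ ‖xξ‖ + ‖x*ξ‖`) there are a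
neighbourhood `U` of the identity of `G` and `A ∈ ω` with `α_s(x ν) - x ν` in that
neighbourhood for all `s ∈ U`, `ν ∈ A`. -/
def AOEquicontinuous {G H : Type*} [TopologicalSpace G] [Group G]
    [NormedAddCommGroup H] [InnerProductSpace ℂ H] [CompleteSpace H]
    (α : G → ((H →L[ℂ] H) ≃⋆ₐ[ℂ] (H →L[ℂ] H))) (ω : Ultrafilter ℕ)
    (x : ℕ → (H →L[ℂ] H)) : Prop :=
  (∃ C, ∀ ν, ‖x ν‖ ≤ C) ∧
  ∀ ε > (0:ℝ), ∀ ξ : H, ∃ U ∈ nhds (1 : G), ∃ A ∈ ω, ∀ s ∈ U, ∀ ν ∈ A,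
    ‖(α s (x ν) - x ν) ξ‖ < ε ∧ ‖(star (α s (x ν) - x ν)) ξ‖ < ε

set_option synthInstance.maxHeartbeats 100000

open scoped Pointwise
open InnerProductSpace ContinuousLinearMap
open scoped InnerProductSpace

section Spatial

variable {H : Type*} [NormedAddCommGroup H] [InnerProductSpace ℂ H] [CompleteSpace H]
  (β : (H →L[ℂ] H) ≃⋆ₐ[ℂ] (H →L[ℂ] H))

namespace StarAlgEquiv

lemma exists_norm_eq_one_apply_rankOne_self {ξ : H} (hξ : ‖ξ‖ = 1) :
    ∃ η : H, ‖η‖ = 1 ∧ β (rankOne ℂ ξ ξ) η = η := by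
  set q := β (rankOne ℂ ξ ξ)
  have hq : IsIdempotentElem q := (isIdempotentElem_rankOne_self hξ).map β
  have hξ0 : ξ ≠ 0 := norm_ne_zero_iff.mp (by simp [hξ])
  have hq0 : q ≠ 0 := by
    rw [ne_eq, map_eq_zero_iff β β.injective]
    exact rankOne_ne_zero hξ0 hξ0
  obtain ⟨η₁, hη₁⟩ : ∃ η₁, q η₁ ≠ 0 := by
    by_contra! h
    exact hq0 (ContinuousLinearMap.ext h)
  refine ⟨‖q η₁‖⁻¹ • q η₁, norm_smul_inv_norm hη₁, ?_⟩
  rw [ContinuousLinearMap.map_smul_of_tower, ← mul_apply_eq_comp, hq.eq]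

noncomputable def spatialMap (ξ η : H) : H →ₗ[ℂ] H where
  toFun ζ := β (rankOne ℂ ζ ξ) η
  map_add' a b := by simp
  map_smul' c a := by simp

lemma spatialMap_apply (ξ η ζ : H) : β.spatialMap ξ η ζ = β (rankOne ℂ ζ ξ) η := rfl

lemma apply_spatialMap (ξ η : H) (x : H →L[ℂ] H) (ζ : H) :
    β x (β.spatialMap ξ η ζ) = β.spatialMap ξ η (x ζ) := by
  rw [spatialMap_apply, spatialMap_apply, ← mul_apply_eq_comp, ← map_mul, mul_def, comp_rankOne]

variable {β} {ξ η : H}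

lemma inner_spatialMap (hη : ‖η‖ = 1) (hβη : β (rankOne ℂ ξ ξ) η = η) (a b : H) :
    ⟪β.spatialMap ξ η a, β.spatialMap ξ η b⟫_ℂ = ⟪a, b⟫_ℂ := by
  calc ⟪β (rankOne ℂ a ξ) η, β (rankOne ℂ b ξ) η⟫_ℂ
      = ⟪η, β (rankOne ℂ ξ a * rankOne ℂ b ξ) η⟫_ℂ := by
        rw [← adjoint_inner_right, ← star_eq_adjoint, ← map_star β (rankOne ℂ a ξ),
          star_eq_adjoint, adjoint_rankOne, map_mul, mul_apply_eq_comp]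
    _ = ⟪a, b⟫_ℂ * ⟪η, η⟫_ℂ := by
        rw [mul_def, rankOne_comp_rankOne, map_smul, smul_apply, hβη, inner_smul_right]
    _ = ⟪a, b⟫_ℂ := by
        rw [inner_self_eq_norm_sq_to_K, hη]
        simp

lemma spatialMap_surjective (hη : ‖η‖ = 1) (hβη : β (rankOne ℂ ξ ξ) η = η) :
    Function.Surjective (β.spatialMap ξ η) := by
  intro w
  refine ⟨β.symm (rankOne ℂ w η) ξ, ?_⟩
  rw [spatialMap_apply, ← comp_rankOne, ← mul_def, map_mul, mul_apply_eq_comp, hβη,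
    β.apply_symm_apply, rankOne_apply, inner_self_eq_norm_sq_to_K, hη]
  simp

theorem exists_linearIsometryEquiv_apply_eq :
    ∃ U : H ≃ₗᵢ[ℂ] H, ∀ (x : H →L[ℂ] H) (ξ : H), β x ξ = U (x (U.symm ξ)) := by
  rcases subsingleton_or_nontrivial H with hH | hH
  · exact ⟨LinearIsometryEquiv.refl ℂ H, fun _ _ => Subsingleton.elim _ _⟩
  obtain ⟨ξ₁, hξ₁⟩ := exists_ne (0 : H)
  obtain ⟨η, hη, hβη⟩ :=
    β.exists_norm_eq_one_apply_rankOne_self (norm_smul_inv_norm (𝕜 := ℂ) hξ₁)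
  let U := LinearIsometryEquiv.ofSurjective
    ((β.spatialMap _ η).isometryOfInner (inner_spatialMap hη hβη))
    (spatialMap_surjective hη hβη)
  refine ⟨U, fun x ξ => ?_⟩
  obtain ⟨ζ, rfl⟩ := U.surjective ξ
  rw [U.symm_apply_apply]
  exact β.apply_spatialMap _ η x ζ

end StarAlgEquiv

end Spatial

section Translation

variable {G E : Type*} [TopologicalSpace G] [Group G] [IsTopologicalGroup G] [MeasurableSpace G]
  [BorelSpace G] {μ : Measure G} [NormedAddCommGroup E]

theorem HasCompactSupport.tendsto_integral_norm_comp_inv_mul_sub [LocallyCompactSpace G]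
    [T2Space G] [FirstCountableTopology G] [IsFiniteMeasureOnCompacts μ] {g : G → E}
    (hg : Continuous g) (hg_supp : HasCompactSupport g) :
    Tendsto (fun t => ∫ s, ‖g (t⁻¹ * s) - g s‖ ∂μ) (𝓝 1) (𝓝 0) := by
  obtain ⟨K₀, hK₀, hK₀1⟩ := exists_compact_mem_nhds (1 : G)
  obtain ⟨B, hB⟩ := hg_supp.exists_bound_of_continuous hg
  set K := K₀ * tsupport g ∪ tsupport g
  have hK : IsCompact K := (hK₀.mul hg_supp).union hg_supp
  have hdom : ∀ t ∈ K₀, ∀ s, ‖g (t⁻¹ * s) - g s‖ ≤ K.indicator (fun _ => 2 * B) s := by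
    intro t ht s
    by_cases hs : s ∈ K
    · rw [Set.indicator_of_mem hs, two_mul]
      exact (norm_sub_le _ _).trans (add_le_add (hB _) (hB _))
    · have hts : t⁻¹ * s ∉ tsupport g := fun h => hs (Or.inl (by simpa using Set.mul_mem_mul ht h))
      have hs' : s ∉ tsupport g := fun h => hs (Or.inr h)
      simp [Set.indicator_of_notMem hs, image_eq_zero_of_notMem_tsupport hts,
        image_eq_zero_of_notMem_tsupport hs']
  have hlim : ∀ s, Tendsto (fun t => ‖g (t⁻¹ * s) - g s‖) (𝓝 1) (𝓝 0) := fun s => by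
    have hc : Continuous fun t : G => ‖g (t⁻¹ * s) - g s‖ := by fun_prop
    simpa using hc.tendsto 1
  simpa using tendsto_integral_filter_of_dominated_convergence (K.indicator fun _ => 2 * B)
    (Eventually.of_forall fun t =>
      ((hg.comp (continuous_const_mul t⁻¹)).sub hg).norm.aestronglyMeasurable)
    (eventually_of_mem hK₀1 fun t ht => Eventually.of_forall fun s => by simpa using hdom t ht s)
    ((integrableOn_const hK.measure_lt_top.ne).integrable_indicator hK.isClosed.measurableSet)
    (Eventually.of_forall hlim)

lemma integral_norm_comp_inv_mul_sub_le [μ.IsMulLeftInvariant] {f g : G → E}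
    (hf : Integrable f μ) (hg : Integrable g μ) (t : G) :
    ∫ s, ‖f (t⁻¹ * s) - f s‖ ∂μ ≤ ∫ s, ‖g (t⁻¹ * s) - g s‖ ∂μ + 2 * ∫ s, ‖f s - g s‖ ∂μ := by
  have hfg : Integrable (fun s => ‖f s - g s‖) μ := (hf.sub hg).norm
  have hfgt : Integrable (fun s => ‖f (t⁻¹ * s) - g (t⁻¹ * s)‖) μ := hfg.comp_mul_left t⁻¹
  have hgt : Integrable (fun s => ‖g (t⁻¹ * s) - g s‖) μ := ((hg.comp_mul_left t⁻¹).sub hg).norm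
  have hsum : Integrable (fun s => ‖f (t⁻¹ * s) - g (t⁻¹ * s)‖ + ‖g (t⁻¹ * s) - g s‖) μ :=
    hfgt.add hgt
  calc ∫ s, ‖f (t⁻¹ * s) - f s‖ ∂μ
      ≤ ∫ s, (‖f (t⁻¹ * s) - g (t⁻¹ * s)‖ + ‖g (t⁻¹ * s) - g s‖ + ‖f s - g s‖) ∂μ := by
        refine integral_mono ((hf.comp_mul_left t⁻¹).sub hf).norm (hsum.add hfg) fun s => ?_
        simpa [dist_eq_norm, norm_sub_rev (g s)] using
          dist_triangle4 (f (t⁻¹ * s)) (g (t⁻¹ * s)) (g s) (f s)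
    _ = ∫ s, ‖g (t⁻¹ * s) - g s‖ ∂μ + 2 * ∫ s, ‖f s - g s‖ ∂μ := by
        rw [integral_add hsum hfg, integral_add hfgt hgt,
          integral_mul_left_eq_self (fun s => ‖f s - g s‖) t⁻¹]
        ring

theorem MeasureTheory.Integrable.tendsto_integral_norm_comp_inv_mul_sub [LocallyCompactSpace G]
    [T2Space G] [FirstCountableTopology G] [NormalSpace G] [μ.IsMulLeftInvariant] [μ.Regular]
    [NormedSpace ℝ E] {f : G → E} (hf : Integrable f μ) :
    Tendsto (fun t => ∫ s, ‖f (t⁻¹ * s) - f s‖ ∂μ) (𝓝 1) (𝓝 0) := by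
  refine tendsto_order.2 ⟨fun a ha => Eventually.of_forall fun t =>
    ha.trans_le (integral_nonneg fun _ => norm_nonneg _), fun ε hε => ?_⟩
  obtain ⟨g, hg_supp, hfg, hg, hgi⟩ :=
    hf.exists_hasCompactSupport_integral_sub_le (by positivity : 0 < ε / 4)
  filter_upwards [(hg_supp.tendsto_integral_norm_comp_inv_mul_sub (μ := μ) hg).eventually_lt_const
    (by positivity : 0 < ε / 2)] with t ht
  linarith [integral_norm_comp_inv_mul_sub_le hf hgi t]

end Translation

lemma norm_integral_smul_le {X E 𝕜 : Type*} [MeasurableSpace X] {μ : Measure X} [RCLike 𝕜]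
    [NormedAddCommGroup E] [NormedSpace 𝕜 E] [NormedSpace ℝ E] {g : X → 𝕜}
    (hg : Integrable g μ) {v : X → E} {B : ℝ} (hv : ∀ s, ‖v s‖ ≤ B) :
    ‖∫ s, g s • v s ∂μ‖ ≤ (∫ s, ‖g s‖ ∂μ) * B := by
  rw [← integral_mul_const]
  refine norm_integral_le_of_norm_le (hg.norm.mul_const B) (Eventually.of_forall fun s => ?_)
  rw [norm_smul]
  exact mul_le_mul_of_nonneg_left (hv s) (norm_nonneg _)

section Averaging

open scoped ComplexConjugate

variable {G H : Type*} [NormedAddCommGroup H] [InnerProductSpace ℂ H] [CompleteSpace H]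
  {α : G → ((H →L[ℂ] H) ≃⋆ₐ[ℂ] (H →L[ℂ] H))}

lemma norm_apply_apply_le (hiso : ∀ s x, ‖α s x‖ = ‖x‖) (s : G) (z : H →L[ℂ] H) (ξ : H) :
    ‖α s z ξ‖ ≤ ‖z‖ * ‖ξ‖ :=
  hiso s z ▸ (α s z).le_opNorm ξ

variable [MeasurableSpace G] {μ : Measure G}

lemma norm_le_of_apply_eq_integral (hiso : ∀ s x, ‖α s x‖ = ‖x‖) {g : G → ℂ}
    (hg : Integrable g μ) {z w : H →L[ℂ] H} (hw : ∀ ξ, w ξ = ∫ s, g s • α s z ξ ∂μ) :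
    ‖w‖ ≤ (∫ s, ‖g s‖ ∂μ) * ‖z‖ := by
  refine w.opNorm_le_bound (by positivity) fun ξ => ?_
  rw [hw, mul_assoc]
  exact norm_integral_smul_le hg fun s => norm_apply_apply_le hiso s z ξ

lemma apply_apply_eq_integral_comp_inv_mul [Group G] [MeasurableMul G] [μ.IsMulLeftInvariant]
    (hhom : ∀ s t x, α (s * t) x = α s (α t x)) {g : G → ℂ} {z w : H →L[ℂ] H}
    (hw : ∀ ξ, w ξ = ∫ s, g s • α s z ξ ∂μ) (t : G) (ξ : H) :
    α t w ξ = ∫ s, g (t⁻¹ * s) • α s z ξ ∂μ := by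
  obtain ⟨U, hU⟩ := (α t).exists_linearIsometryEquiv_apply_eq
  calc α t w ξ = U (∫ s, g s • α s z (U.symm ξ) ∂μ) := by rw [hU, hw]
    _ = ∫ s, U (g s • α s z (U.symm ξ)) ∂μ := (U.toLinearIsometry.integral_comp_comm _).symm
    _ = ∫ s, g (t⁻¹ * (t * s)) • α (t * s) z ξ ∂μ := by simp [hhom, hU]
    _ = ∫ s, g (t⁻¹ * s) • α s z ξ ∂μ :=
        integral_mul_left_eq_self (fun s => g (t⁻¹ * s) • α s z ξ) t

variable [TopologicalSpace G] [OpensMeasurableSpace G] [SecondCountableTopology G]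

lemma integrable_smul_apply_apply (hiso : ∀ s x, ‖α s x‖ = ‖x‖)
    (hcont : ∀ (x : H →L[ℂ] H) (ξ : H), Continuous fun s => α s x ξ)
    {g : G → ℂ} (hg : Integrable g μ) (z : H →L[ℂ] H) (ξ : H) :
    Integrable (fun s => g s • α s z ξ) μ := by
  refine (hg.norm.mul_const (‖z‖ * ‖ξ‖)).mono'
    (hg.aestronglyMeasurable.smul (hcont z ξ).aestronglyMeasurable)
    (Eventually.of_forall fun s => ?_)
  rw [norm_smul]
  exact mul_le_mul_of_nonneg_left (norm_apply_apply_le hiso s z ξ) (norm_nonneg _)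

lemma star_apply_eq_integral (hiso : ∀ s x, ‖α s x‖ = ‖x‖)
    (hcont : ∀ (x : H →L[ℂ] H) (ξ : H), Continuous fun s => α s x ξ)
    {g : G → ℂ} (hg : Integrable g μ) {z w : H →L[ℂ] H}
    (hw : ∀ ξ, w ξ = ∫ s, g s • α s z ξ ∂μ) (ξ : H) :
    star w ξ = ∫ s, conj (g s) • α s (star z) ξ ∂μ := by
  have hconj : Integrable (fun s => conj (g s)) μ :=
    Complex.conjCLE.toContinuousLinearMap.integrable_comp hg
  refine ext_inner_left ℂ fun ζ => ?_
  calc ⟪ζ, star w ξ⟫_ℂ = conj ⟪ξ, w ζ⟫_ℂ := by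
        rw [star_eq_adjoint, adjoint_inner_right, inner_conj_symm]
    _ = ∫ s, conj ⟪ξ, g s • α s z ζ⟫_ℂ ∂μ := by
        rw [hw, ← integral_inner (integrable_smul_apply_apply hiso hcont hg z ζ), integral_conj]
    _ = ∫ s, ⟪ζ, conj (g s) • α s (star z) ξ⟫_ℂ ∂μ := by
        congr 1 with s
        rw [inner_conj_symm, inner_smul_left, inner_smul_right, map_star (α s) z,
          star_eq_adjoint, adjoint_inner_right]
    _ = ⟪ζ, ∫ s, conj (g s) • α s (star z) ξ ∂μ⟫_ℂ :=
        integral_inner (integrable_smul_apply_apply hiso hcont hconj _ ξ) ζ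

variable [Group G] [MeasurableMul G] [μ.IsMulLeftInvariant]

lemma norm_apply_sub_apply_le (hhom : ∀ s t x, α (s * t) x = α s (α t x))
    (hiso : ∀ s x, ‖α s x‖ = ‖x‖) (hcont : ∀ (x : H →L[ℂ] H) (ξ : H), Continuous fun s => α s x ξ)
    {g : G → ℂ} (hg : Integrable g μ) {z w : H →L[ℂ] H}
    (hw : ∀ ξ, w ξ = ∫ s, g s • α s z ξ ∂μ) (t : G) (ξ : H) :
    ‖(α t w - w) ξ‖ ≤ (∫ s, ‖g (t⁻¹ * s) - g s‖ ∂μ) * (‖z‖ * ‖ξ‖) := by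
  have hgt := hg.comp_mul_left t⁻¹
  rw [sub_apply, apply_apply_eq_integral_comp_inv_mul hhom hw, hw,
    ← integral_sub (integrable_smul_apply_apply hiso hcont hgt z ξ)
      (integrable_smul_apply_apply hiso hcont hg z ξ)]
  simp_rw [← sub_smul]
  exact norm_integral_smul_le (hgt.sub hg) fun s => norm_apply_apply_le hiso s z ξ

lemma norm_star_apply_sub_apply_le (hhom : ∀ s t x, α (s * t) x = α s (α t x))
    (hiso : ∀ s x, ‖α s x‖ = ‖x‖) (hcont : ∀ (x : H →L[ℂ] H) (ξ : H), Continuous fun s => α s x ξ)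
    {g : G → ℂ} (hg : Integrable g μ) {z w : H →L[ℂ] H}
    (hw : ∀ ξ, w ξ = ∫ s, g s • α s z ξ ∂μ) (t : G) (ξ : H) :
    ‖star (α t w - w) ξ‖ ≤ (∫ s, ‖g (t⁻¹ * s) - g s‖ ∂μ) * (‖z‖ * ‖ξ‖) := by
  have hconj : Integrable (fun s => conj (g s)) μ :=
    Complex.conjCLE.toContinuousLinearMap.integrable_comp hg
  rw [star_sub, ← map_star (α t) w]
  simpa [← map_sub, norm_star] using norm_apply_sub_apply_le hhom hiso hcont hconj
    (star_apply_eq_integral hiso hcont hg hw) t ξ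

end Averaging

theorem statement11_general {G H : Type*} [TopologicalSpace G] [Group G] [IsTopologicalGroup G]
    [LocallyCompactSpace G] [T2Space G] [SecondCountableTopology G]
    [MeasurableSpace G] [BorelSpace G]
    (μ : Measure G) [μ.IsHaarMeasure]
    [NormedAddCommGroup H] [InnerProductSpace ℂ H] [CompleteSpace H]
    (α : G → ((H →L[ℂ] H) ≃⋆ₐ[ℂ] (H →L[ℂ] H)))
    (hhom : ∀ s t x, α (s * t) x = α s (α t x))
    (hiso : ∀ s x, ‖α s x‖ = ‖x‖)
    (hcont : ∀ (x : H →L[ℂ] H) (ξ : H), Continuous fun s => (α s x) ξ)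
    (ω : Ultrafilter ℕ)
    (f : G → ℂ) (hf : Integrable f μ)
    (x : ℕ → (H →L[ℂ] H)) (C : ℝ) (hC : ∀ ν, ‖x ν‖ ≤ C)
    (y : ℕ → (H →L[ℂ] H))
    (hy : ∀ ν (ξ : H), y ν ξ = ∫ s, f s • (α s (x ν)) ξ ∂μ) :
    AOEquicontinuous α ω y := by
  refine ⟨⟨(∫ s, ‖f s‖ ∂μ) * C, fun ν => (norm_le_of_apply_eq_integral hiso hf (hy ν)).trans
    (by gcongr; exact hC ν)⟩, fun ε hε ξ => ?_⟩
  have hδ : Tendsto (fun t => (∫ s, ‖f (t⁻¹ * s) - f s‖ ∂μ) * (C * ‖ξ‖)) (𝓝 1) (𝓝 0) := by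
    simpa using (hf.tendsto_integral_norm_comp_inv_mul_sub (μ := μ)).mul_const (C * ‖ξ‖)
  refine ⟨_, hδ.eventually_lt_const hε, Set.univ, univ_mem, fun t ht ν _ => ⟨?_, ?_⟩⟩
  · calc _ ≤ _ := norm_apply_sub_apply_le hhom hiso hcont hf (hy ν) t ξ
      _ ≤ _ := by gcongr; exact hC ν
      _ < ε := ht
  · calc _ ≤ _ := norm_star_apply_sub_apply_le hhom hiso hcont hf (hy ν) t ξ
      _ ≤ _ := by gcongr; exact hC ν
      _ < ε := ht

/-- for a strongly continuous action `α` of a locally compact group `G` on a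
von Neumann algebra `M` and `f ∈ L¹(G)`, the averaged sequence `(α_f(x ν))`, where
`α_f(y) = ∫ f(s) α_s(y) ds`, of any norm-bounded sequence `(x ν)` in `M` is
`(α, ω)`-equicontinuous. -/
theorem statement11 {G H : Type*} [TopologicalSpace G] [Group G] [IsTopologicalGroup G]
    [LocallyCompactSpace G] [T2Space G] [SecondCountableTopology G]
    [MeasurableSpace G] [BorelSpace G]
    (μ : Measure G) [μ.IsHaarMeasure]
    [NormedAddCommGroup H] [InnerProductSpace ℂ H] [CompleteSpace H]
    (M : VonNeumannAlgebra H)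
    (α : G → ((H →L[ℂ] H) ≃⋆ₐ[ℂ] (H →L[ℂ] H)))
    (hhom : ∀ s t x, α (s * t) x = α s (α t x))
    (hone : ∀ x, α 1 x = x)
    (hiso : ∀ s x, ‖α s x‖ = ‖x‖)
    (hM : ∀ s, ∀ m ∈ M, α s m ∈ M)
    (hcont : ∀ (x : H →L[ℂ] H) (ξ : H), Continuous fun s => (α s x) ξ)
    (ω : Ultrafilter ℕ) (hfree : (Filter.cofinite : Filter ℕ) ≤ (ω : Filter ℕ))
    (f : G → ℂ) (hf : Integrable f μ)
    (x : ℕ → (H →L[ℂ] H)) (hx : ∀ ν, x ν ∈ M) (C : ℝ) (hC : ∀ ν, ‖x ν‖ ≤ C)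
    (y : ℕ → (H →L[ℂ] H))
    (hy : ∀ ν (ξ : H), y ν ξ = ∫ s, f s • (α s (x ν)) ξ ∂μ) :
    AOEquicontinuous α ω y :=
  statement11_general μ α hhom hiso hcont ω f hf x C hC y hy
end

section
/- Let G = ℝ and consider the translation action α of ℝ on M = L^∞(ℝ). Then for any free ultrafilter ω on ℕ, the equicontinuous part M_α^ω of the ultraproduct coincides with the copy of M given by constant sequences. Concretely: if (f^ν) is a bounded sequence in L^∞(ℝ) and g ∈ L^1(ℝ), then the sequence (g * f^ν) agrees modulo ω-trivial sequences with the constant sequence g * f, where f = weak-* lim_{ν→ω} f^ν. -/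
/-!
Convolution with `g ∈ L¹(ℝ)` makes any family of functions bounded by `C` equicontinuous:
`‖(g ⋆ F) t - (g ⋆ F) t'‖ ≤ C ‖g (t - ·) - g (t' - ·)‖₁`, and translation is continuous in `L¹`.
Testing the weak-* convergence `fν → f` against `g (t - ·) ∈ L¹` gives pointwise convergence
`g ⋆ fν → g ⋆ f` along `ω`, and by Arzelà–Ascoli pointwise convergence of an equicontinuous
family is uniform on compact sets.
-/

open MeasureTheory Filter Topology

theorem EquicontinuousOn.tendstoUniformlyOn_of_tendsto {ι X α : Type*} [TopologicalSpace X]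
    [UniformSpace α] {F : ι → X → α} {f : X → α} {l : Filter ι} {K : Set X}
    (hK : IsCompact K) (hF : EquicontinuousOn F K)
    (h : ∀ x ∈ K, Tendsto (fun i => F i x) l (𝓝 (f x))) :
    TendstoUniformlyOn F f l K := by
  have : CompactSpace K := isCompact_iff_compactSpace.mp hK
  have hFK := (equicontinuous_restrict_iff F).mpr hF
  rw [tendstoUniformlyOn_iff_tendstoUniformly_comp_coe]
  exact UniformFun.tendsto_iff_tendstoUniformly.mp <|
    (hFK.tendsto_uniformFun_iff_pi l (K.domRestrict f)).mpr (tendsto_pi_nhds.mpr fun x => h x x.2)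

theorem tendsto_integral_norm_sub_comp_sub {E : Type*} [NormedAddCommGroup E] {g : ℝ → E}
    (hg : Integrable g) (t₀ : ℝ) :
    Tendsto (fun t => ∫ s, ‖g (t₀ - s) - g (t - s)‖) (𝓝 t₀) (𝓝 0) := by
  let reflect : ℝ → C(ℝ, ℝ) := fun t => ⟨fun s => t - s, by fun_prop⟩
  have hreflect : Continuous reflect :=
    ContinuousMap.continuous_of_continuous_uncurry _ (continuous_fst.sub continuous_snd)
  have hmp (t : ℝ) : MeasurePreserving (reflect t) volume volume :=
    volume.measurePreserving_sub_left t
  let G : ℝ → Lp E 1 (volume : Measure ℝ) := fun t =>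
    Lp.compMeasurePreserving (reflect t) (hmp t) (hg.toL1 g)
  have hG : Tendsto G (𝓝 t₀) (𝓝 (G t₀)) :=
    tendsto_const_nhds.compMeasurePreservingLp (hreflect.tendsto t₀) hmp (hmp t₀)
      ENNReal.one_ne_top
  have hGg (t : ℝ) : G t =ᵐ[volume] fun s => g (t - s) := by
    filter_upwards [Lp.coeFn_compMeasurePreserving (hg.toL1 g) (hmp t),
      (hmp t).quasiMeasurePreserving.ae_eq hg.coeFn_toL1] with s hs hs'
    exact hs.trans hs'
  have hdist (t : ℝ) : dist (G t) (G t₀) = ∫ s, ‖g (t₀ - s) - g (t - s)‖ := by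
    rw [L1.dist_eq_integral_dist]
    refine integral_congr_ae ?_
    filter_upwards [hGg t₀, hGg t] with s h₀ h
    rw [h₀, h, dist_eq_norm']
  simpa only [hdist] using tendsto_iff_dist_tendsto_zero.mp hG

theorem integral_mul_comp_sub_eq {𝕜 : Type*} [RCLike 𝕜] (g F : ℝ → 𝕜) (t : ℝ) :
    ∫ s, g s * F (t - s) = ∫ s, g (t - s) * F s := by
  simpa only [sub_sub_cancel] using
    integral_sub_left_eq_self (fun s => g (t - s) * F s) (μ := volume) t

section Convolution

variable {𝕜 : Type*} [RCLike 𝕜] {g : ℝ → 𝕜}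

theorem MeasureTheory.Integrable.comp_sub_left_mul_bdd (hg : Integrable g) {F : ℝ → 𝕜}
    (hF : AEStronglyMeasurable F) {C : ℝ} (hFC : ∀ s, ‖F s‖ ≤ C) (t : ℝ) :
    Integrable fun s => g (t - s) * F s := by
  simpa only [mul_comm] using
    (hg.comp_sub_left t).bdd_mul hF (Eventually.of_forall hFC)

theorem dist_integral_comp_sub_mul_le (hg : Integrable g) {F : ℝ → 𝕜}
    (hF : AEStronglyMeasurable F) {C : ℝ} (hFC : ∀ s, ‖F s‖ ≤ C) (t t' : ℝ) :
    dist (∫ s, g (t - s) * F s) (∫ s, g (t' - s) * F s)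
      ≤ C * ∫ s, ‖g (t - s) - g (t' - s)‖ := by
  rw [dist_eq_norm, ← integral_sub (hg.comp_sub_left_mul_bdd hF hFC t)
    (hg.comp_sub_left_mul_bdd hF hFC t'), ← integral_const_mul]
  refine (norm_integral_le_integral_norm _).trans <| integral_mono_of_nonneg
    (Eventually.of_forall fun s => norm_nonneg _)
    (((hg.comp_sub_left t).sub (hg.comp_sub_left t')).norm.const_mul C)
    (Eventually.of_forall fun s => ?_)
  simp only [← sub_mul, norm_mul, mul_comm C]
  exact mul_le_mul_of_nonneg_left (hFC s) (norm_nonneg _)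

theorem MeasureTheory.Integrable.equicontinuous_integral_comp_sub_mul {ι : Type*}
    (hg : Integrable g) {F : ι → ℝ → 𝕜} (hF : ∀ i, AEStronglyMeasurable (F i)) {C : ℝ}
    (hFC : ∀ i s, ‖F i s‖ ≤ C) :
    Equicontinuous fun i t => ∫ s, g (t - s) * F i s := fun t₀ =>
  Metric.equicontinuousAt_of_continuity_modulus _
    (by simpa only [mul_zero] using (tendsto_integral_norm_sub_comp_sub hg t₀).const_mul C) _
    (Eventually.of_forall fun t i => dist_integral_comp_sub_mul_le hg (hF i) (hFC i) t₀ t)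

end Convolution

theorem statement13_general (ω : Ultrafilter ℕ)
    (C : ℝ) (fν : ℕ → ℝ → ℂ) (f : ℝ → ℂ)
    (hmeas : ∀ ν, Measurable (fν ν))
    (hbdd : ∀ ν s, ‖fν ν s‖ ≤ C)
    (hweak : ∀ h : ℝ → ℂ, Integrable h →
      Tendsto (fun ν => ∫ s, h s * fν ν s) (ω : Filter ℕ) (nhds (∫ s, h s * f s)))
    (g : ℝ → ℂ) (hg : Integrable g)
    (K : Set ℝ) (hK : IsCompact K) :
    TendstoUniformlyOn (fun ν t => ∫ s, g s * fν ν (t - s))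
      (fun t => ∫ s, g s * f (t - s)) (ω : Filter ℕ) K := by
  simp only [integral_mul_comp_sub_eq g]
  exact (hg.equicontinuous_integral_comp_sub_mul (fun ν => (hmeas ν).aestronglyMeasurable)
    hbdd).equicontinuousOn K |>.tendstoUniformlyOn_of_tendsto hK
      fun t _ => hweak _ (hg.comp_sub_left t)

/-- for the translation action of `ℝ` on `L^∞(ℝ)`, the equicontinuous part of
the ultraproduct reduces to constant sequences: if `(fν)` is a uniformly bounded sequence
of functions with weak-* ultralimit `f` (tested against `L¹`), and `g ∈ L¹(ℝ)`, then the
averaged sequence `(g * fν)` agrees modulo ω-trivial sequences with the constant sequence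
`g * f`; concretely `g * fν → g * f` along `ω` uniformly on every compact set. -/
theorem statement13 (ω : Ultrafilter ℕ)
    (hfree : (Filter.cofinite : Filter ℕ) ≤ (ω : Filter ℕ))
    (C : ℝ) (fν : ℕ → ℝ → ℂ) (f : ℝ → ℂ)
    (hmeas : ∀ ν, Measurable (fν ν)) (hfmeas : Measurable f)
    (hbdd : ∀ ν s, ‖fν ν s‖ ≤ C) (hfb : ∀ s, ‖f s‖ ≤ C)
    (hweak : ∀ h : ℝ → ℂ, Integrable h →
      Tendsto (fun ν => ∫ s, h s * fν ν s) (ω : Filter ℕ) (nhds (∫ s, h s * f s)))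
    (g : ℝ → ℂ) (hg : Integrable g)
    (K : Set ℝ) (hK : IsCompact K) :
    TendstoUniformlyOn (fun ν t => ∫ s, g s * fν ν (t - s))
      (fun t => ∫ s, g s * f (t - s)) (ω : Filter ℕ) K :=
  statement13_general ω C fν f hmeas hbdd hweak g hg K hK
end
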